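/- arXiv:2603.18978 — 16 statements merged into one kernel-verified Lean document; each statement's English description precedes it below -/
import Mathlib

section
/- Let Y ⊆ ℝⁿ be open, and let ω : Y → ℝⁿ, f : Y → ℝⁿ, F : Y → ℝ, and fnum : Y × Y → ℝⁿ be given with fnum(u,u) = f(u) for all u ∈ Y. Then there exists Fnum : Y × Y → ℝ with Fnum(u,u) = F(u) for all u and satisfying ω(u₀) · (fnum(u₀,u₊) − fnum(u₋,u₀)) ≥ Fnum(u₀,u₊) − Fnum(u₋,u₀) for all u₋, u₀, u₊ ∈ Y, if and only if (ω(u₊) − ω(u₋)) · fnum(u₋,u₊) ≤ (ω(u₊)·f(u₊) − F(u₊)) − (ω(u₋)·f(u₋) − F(u₋)) for all u₋, u₊ ∈ Y. -/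
open Matrix

/-- Algebraic Tadmor lemma (inequality case): existence of a consistent numerical entropy
flux satisfying the cell entropy inequality is equivalent to Tadmor's two-point condition. -/
theorem tadmor_algebraic_characterization
    (n : ℕ) (Y : Set (Fin n → ℝ)) (hY : IsOpen Y)
    (ω f : (Fin n → ℝ) → (Fin n → ℝ)) (F : (Fin n → ℝ) → ℝ)
    (fnum : (Fin n → ℝ) → (Fin n → ℝ) → (Fin n → ℝ))
    (hcons : ∀ u ∈ Y, fnum u u = f u) :
    (∃ Fnum : (Fin n → ℝ) → (Fin n → ℝ) → ℝ,
      (∀ u ∈ Y, Fnum u u = F u) ∧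
      ∀ um ∈ Y, ∀ u0 ∈ Y, ∀ up ∈ Y,
        ω u0 ⬝ᵥ (fnum u0 up - fnum um u0) ≥ Fnum u0 up - Fnum um u0) ↔
    (∀ um ∈ Y, ∀ up ∈ Y,
      (ω up - ω um) ⬝ᵥ fnum um up ≤
        (ω up ⬝ᵥ f up - F up) - (ω um ⬝ᵥ f um - F um)) := by
  constructor
  · rintro ⟨Fnum, hFc, hFin⟩ um hum up hup
    have h1 := hFin um hum um hum up hup
    have h2 := hFin um hum up hup up hup
    rw [hcons um hum] at h1
    rw [hcons up hup] at h2
    rw [hFc um hum] at h1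
    rw [hFc up hup] at h2
    simp only [dotProduct_sub, sub_dotProduct] at *
    linarith
  · intro hT
    refine ⟨fun u v => ((ω u + ω v) ⬝ᵥ fnum u v
      - ((ω u ⬝ᵥ f u - F u) + (ω v ⬝ᵥ f v - F v))) / 2, ?_, ?_⟩
    · intro u hu
      simp only [hcons u hu]
      simp only [add_dotProduct]
      ring
    · intro um hum u0 hu0 up hup
      have h1 := hT um hum u0 hu0
      have h2 := hT u0 hu0 up hup
      simp only [dotProduct_sub, sub_dotProduct, add_dotProduct, ge_iff_le] at *
      linarith
end

section
/- Let Y ⊆ ℝⁿ be open, and let ω : Y → ℝⁿ, f : Y → ℝⁿ, F : Y → ℝ, fnum : Y × Y → ℝⁿ with fnum(u,u) = f(u). Suppose that for all u₋, u₀, u₊ ∈ Y, ω(u₀)·(fnum(u₀,u₊) − fnum(u₋,u₀)) = Fnum(u₀,u₊) − Fnum(u₋,u₀) holds for some Fnum consistent with F (i.e. Fnum(u,u) = F(u)). Then Fnum is uniquely determined by Fnum(u₋,u₊) = ½(F(u₊)+F(u₋)) + ½(ω(u₊)+ω(u₋))·fnum(u₋,u₊) − ½(ω(u₊)·f(u₊)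 + ω(u₋)·f(u₋)). -/
open Matrix

/-- Uniqueness of the numerical entropy flux in the entropy-conservative case:
if the cell entropy equality holds with a consistent `Fnum`, then `Fnum` is
determined by the mean/jump formula. -/
theorem tadmor_entropy_flux_unique
    (n : ℕ) (Y : Set (Fin n → ℝ)) (hY : IsOpen Y)
    (ω f : (Fin n → ℝ) → (Fin n → ℝ)) (F : (Fin n → ℝ) → ℝ)
    (fnum : (Fin n → ℝ) → (Fin n → ℝ) → (Fin n → ℝ))
    (hcons : ∀ u ∈ Y, fnum u u = f u)
    (Fnum : (Fin n → ℝ) → (Fin n → ℝ) → ℝ)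
    (hFcons : ∀ u ∈ Y, Fnum u u = F u)
    (heq : ∀ um ∈ Y, ∀ u0 ∈ Y, ∀ up ∈ Y,
      ω u0 ⬝ᵥ (fnum u0 up - fnum um u0) = Fnum u0 up - Fnum um u0) :
    ∀ um ∈ Y, ∀ up ∈ Y,
      Fnum um up = (F up + F um) / 2
        + ((ω up + ω um) / 2) ⬝ᵥ fnum um up
        - (ω up ⬝ᵥ f up + ω um ⬝ᵥ f um) / 2 := by
  intro um hum up hup
  have h1 := heq um hum um hum up hup
  have h2 := heq um hum up hup up hup
  rw [hcons um hum, hFcons um hum] at h1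
  rw [hcons up hup, hFcons up hup] at h2
  simp only [dotProduct_sub, sub_dotProduct, add_dotProduct, smul_dotProduct,
    Pi.add_apply, Pi.div_apply] at *
  have hdiv : ((ω up + ω um) / 2) ⬝ᵥ fnum um up
      = (ω up ⬝ᵥ fnum um up + ω um ⬝ᵥ fnum um up) / 2 := by
    have : ((ω up + ω um) / 2) = (2⁻¹ : ℝ) • (ω up + ω um) := by
      funext i; simp [div_eq_inv_mul, mul_comm]
    rw [this, smul_dotProduct, add_dotProduct, smul_eq_mul]; ring
  rw [hdiv]
  linarith
end

section
/- Let Y ⊆ ℝⁿ be open, ω : Y → ℝⁿ, f : Y → ℝⁿ, F : Y → ℝ, H : Y → ℝ^{n×m}, g : Y → ℝᵐ, fnum : Y × Y → ℝⁿ with fnum(u,u) = f(u), and Hnum : Y × Y → ℝ^{n×m} with Hnum(u,u) = H(u). Then there exists a consistent Fnum with ω(u₀)·(fnum(u₀,u₊) − fnum(u₋,u₀) + ½Hnum(u₀,u₊)(g(u₊)−g(u₀)) + ½Hnum(u₋,u₀)(g(u₀)−g(u₋))) ≥ Fnum(u₀,u₊) − Fnum(u₋,u₀) for all u₋,u₀,u₊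 ∈ Y, if and only if (ω(u₊)−ω(u₋))·fnum(u₋,u₊) − ½(ω(u₊)+ω(u₋))·Hnum(u₋,u₊)(g(u₊)−g(u₋)) ≤ (ω(u₊)·f(u₊)−F(u₊)) − (ω(u₋)·f(u₋)−F(u₋)) for all u₋,u₊ ∈ Y. -/
open Matrix

private lemma avg_dot {n : ℕ} (x y w : Fin n → ℝ) :
    ((x + y) / 2) ⬝ᵥ w = (x ⬝ᵥ w) / 2 + (y ⬝ᵥ w) / 2 := by
  simp only [dotProduct, Pi.div_apply, Pi.add_apply, Pi.ofNat_apply,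
    Finset.sum_div, ← Finset.sum_add_distrib]
  apply Finset.sum_congr rfl
  intro i _
  ring

/-- Algebraic characterization of the third semi-discrete form of the
nonconservative term `H(u) ∂ₓ g(u)`: existence of a consistent numerical entropy
flux for the three-point scheme is equivalent to a two-point condition. -/
theorem third_form_entropy_characterization
    (n m : ℕ) (Y : Set (Fin n → ℝ)) (hY : IsOpen Y)
    (ω f : (Fin n → ℝ) → (Fin n → ℝ)) (F : (Fin n → ℝ) → ℝ)
    (H : (Fin n → ℝ) → Matrix (Fin n) (Fin m) ℝ)
    (g : (Fin n → ℝ) → (Fin m → ℝ))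
    (fnum : (Fin n → ℝ) → (Fin n → ℝ) → (Fin n → ℝ))
    (Hnum : (Fin n → ℝ) → (Fin n → ℝ) → Matrix (Fin n) (Fin m) ℝ)
    (hfcons : ∀ u ∈ Y, fnum u u = f u)
    (hHcons : ∀ u ∈ Y, Hnum u u = H u) :
    (∃ Fnum : (Fin n → ℝ) → (Fin n → ℝ) → ℝ,
      (∀ u ∈ Y, Fnum u u = F u) ∧
      ∀ um ∈ Y, ∀ u0 ∈ Y, ∀ up ∈ Y,
        ω u0 ⬝ᵥ (fnum u0 up - fnum um u0
          + (1/2 : ℝ) • (Hnum u0 up *ᵥ (g up - g u0))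
          + (1/2 : ℝ) • (Hnum um u0 *ᵥ (g u0 - g um)))
          ≥ Fnum u0 up - Fnum um u0) ↔
    (∀ um ∈ Y, ∀ up ∈ Y,
      (ω up - ω um) ⬝ᵥ fnum um up
        - ((ω up + ω um) / 2) ⬝ᵥ (Hnum um up *ᵥ (g up - g um))
        ≤ (ω up ⬝ᵥ f up - F up) - (ω um ⬝ᵥ f um - F um)) := by
  constructor
  · rintro ⟨Fnum, hc, hineq⟩ um hum up hup
    have h1 := hineq um hum um hum up hup
    have h2 := hineq um hum up hup up hup
    simp only [sub_self, Matrix.mulVec_zero, smul_zero, add_zero,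
      hfcons um hum, hfcons up hup, hc um hum, hc up hup,
      dotProduct_add, dotProduct_sub, dotProduct_smul, smul_eq_mul] at h1 h2
    rw [avg_dot, sub_dotProduct]
    linarith
  · intro h
    refine ⟨fun a b => ω b ⬝ᵥ fnum a b
        - (1/2 : ℝ) * (ω b ⬝ᵥ (Hnum a b *ᵥ (g b - g a)))
        - (ω b ⬝ᵥ f b - F b), ?_, ?_⟩
    · intro u hu
      simp [hfcons u hu, sub_self, Matrix.mulVec_zero]
    · intro um hum u0 h0 up hup
      have h1 := h u0 h0 up hup
      rw [avg_dot, sub_dotProduct] at h1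
      simp only [ge_iff_le, dotProduct_add, dotProduct_sub, dotProduct_smul,
        smul_eq_mul]
      linarith
end

section
/- In the setting of the third-form characterization with equality: if ω(u₀)·(fnum(u₀,u₊) − fnum(u₋,u₀) + ½Hnum(u₀,u₊)(g(u₊)−g(u₀)) + ½Hnum(u₋,u₀)(g(u₀)−g(u₋))) = Fnum(u₀,u₊) − Fnum(u₋,u₀) for all u₋,u₀,u₊ ∈ Y with Fnum consistent, then Fnum is uniquely determined by Fnum = ⟨F⟩ + ⟨ω⟩·fnum − ⟨ω·f⟩ − ¼⟦ω⟧·Hnum⟦g⟧, where ⟨a⟩ = (a₊+a₋)/2 and ⟦a⟧ = a₊ − a₋ with a± = a(u±). -/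
open Matrix

/-- Uniqueness of the numerical entropy flux for the third semi-discrete form of the
nonconservative term, in the entropy-conservative (equality) case:
`Fnum = ⟨F⟩ + ⟨ω⟩·fnum − ⟨ω·f⟩ − ¼⟦ω⟧·Hnum⟦g⟧`. -/
theorem third_form_entropy_flux_unique
    (n m : ℕ) (Y : Set (Fin n → ℝ)) (hY : IsOpen Y)
    (ω f : (Fin n → ℝ) → (Fin n → ℝ)) (F : (Fin n → ℝ) → ℝ)
    (H : (Fin n → ℝ) → Matrix (Fin n) (Fin m) ℝ)
    (g : (Fin n → ℝ) → (Fin m → ℝ))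
    (fnum : (Fin n → ℝ) → (Fin n → ℝ) → (Fin n → ℝ))
    (Hnum : (Fin n → ℝ) → (Fin n → ℝ) → Matrix (Fin n) (Fin m) ℝ)
    (hfcons : ∀ u ∈ Y, fnum u u = f u)
    (hHcons : ∀ u ∈ Y, Hnum u u = H u)
    (Fnum : (Fin n → ℝ) → (Fin n → ℝ) → ℝ)
    (hFcons : ∀ u ∈ Y, Fnum u u = F u)
    (heq : ∀ um ∈ Y, ∀ u0 ∈ Y, ∀ up ∈ Y,
      ω u0 ⬝ᵥ (fnum u0 up - fnum um u0
        + (1/2 : ℝ) • (Hnum u0 up *ᵥ (g up - g u0))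
        + (1/2 : ℝ) • (Hnum um u0 *ᵥ (g u0 - g um)))
        = Fnum u0 up - Fnum um u0) :
    ∀ um ∈ Y, ∀ up ∈ Y,
      Fnum um up = (F up + F um) / 2
        + ((ω up + ω um) / 2) ⬝ᵥ fnum um up
        - (ω up ⬝ᵥ f up + ω um ⬝ᵥ f um) / 2
        - (1/4 : ℝ) * ((ω up - ω um) ⬝ᵥ (Hnum um up *ᵥ (g up - g um))) := by
  intro um hum up hup
  have h1 := heq um hum um hum up hup
  have h2 := heq um hum up hup up hup
  simp only [hfcons um hum, hfcons up hup, hFcons um hum, hFcons up hup, sub_self,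
    Matrix.mulVec_zero, smul_zero, add_zero] at h1 h2
  have hdiv : ((ω up + ω um) / 2) ⬝ᵥ fnum um up
      = (ω up ⬝ᵥ fnum um up + ω um ⬝ᵥ fnum um up) / 2 := by
    simp only [dotProduct, Pi.div_apply, Pi.add_apply, Pi.ofNat_apply]
    rw [← Finset.sum_add_distrib, Finset.sum_div]
    refine Finset.sum_congr rfl fun i _ => ?_
    push_cast
    ring
  simp only [dotProduct_add, dotProduct_sub, dotProduct_smul, smul_eq_mul,
    add_dotProduct, sub_dotProduct] at h1 h2 ⊢
  rw [hdiv]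
  ring_nf at h1 h2 ⊢
  linarith
end

section
/- For the coupled Burgers system ∂ₜu + u∂ₓ(u+v) = 0, ∂ₜv + v∂ₓ(u+v) = 0 with entropy U = (u+v)²/2 and entropy flux F = (u+v)³/3: the choice of numerical fluxes unum = ⟨u⟩, vnum = ⟨v⟩ in the linear combination α·(third form) + (1−α)·(first form) satisfies the entropy conservation condition α⟨u+v⟩(unum + vnum)⟦u+v⟧ + (1−α)(⟨(u+v)u⟩ + ⟨(u+v)v⟩)⟦u+v⟧ = ⟦(u+v)³⟧/3 for all states (u₋,v₋), (u₊,v₊), if and only if α = 2/3. -/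
/-- For the coupled Burgers system with entropy `U = (u+v)²/2` and entropy flux
`F = (u+v)³/3`, the arithmetic-mean numerical fluxes `unum = ⟨u⟩`, `vnum = ⟨v⟩` in the
combination `α·(third form) + (1−α)·(first form)` are entropy conservative
if and only if `α = 2/3`. -/
theorem coupled_burgers_entropy_conservation_iff
    (α : ℝ) :
    (∀ um vm up vp : ℝ,
      α * (((up + vp) + (um + vm)) / 2)
          * ((up + um) / 2 + (vp + vm) / 2) * ((up + vp) - (um + vm))
        + (1 - α) * ((((up + vp) * up + (um + vm) * um) / 2)
            + (((up + vp) * vp + (um + vm) * vm) / 2)) * ((up + vp) - (um + vm))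
        = ((up + vp) ^ 3 - (um + vm) ^ 3) / 3) ↔ α = 2 / 3 := by
  constructor
  · intro h
    have := h 0 0 1 0
    norm_num at this
    linarith
  · intro h
    subst h
    intro um vm up vp
    ring
end

section
/- Let m, n ∈ ℕ with m, n ≥ 2 both even. Then there exist no symmetric consistent functions hnum : ℝ × ℝ → ℝ (with hnum(u,u) = uᵐ) and parameter α ∈ ℝ such that α⟨u⟩ hnum(u₋,u₊) ⟦uⁿ⟧ + (1−α)⟨u^{m+1}⟩⟦uⁿ⟧ = (n/(m+n+1))⟦u^{m+n+1}⟧ holds for all u₋, u₊ ∈ ℝ. In particular, taking u₋ = −1 and u₊ = 1 gives a contradiction since the left-hand side vanishes while the right-hand side equals 2n/(m+n+1) ≠ 0. -/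
/-- Non-existence of symmetric consistent entropy-conservative fluxes of the combined
first/third form for `∂ₜu + uᵐ∂ₓ(uⁿ) = 0` with entropy `U = u²/2` when `m, n ≥ 2` are
both even. -/
theorem no_entropy_conservative_flux_even_exponents
    (m n : ℕ) (hm : 2 ≤ m) (hn : 2 ≤ n) (hme : Even m) (hne : Even n) :
    ¬ ∃ (hnum : ℝ → ℝ → ℝ) (α : ℝ),
      (∀ a b : ℝ, hnum a b = hnum b a) ∧
      (∀ u : ℝ, hnum u u = u ^ m) ∧
      (∀ um up : ℝ,
        α * ((up + um) / 2) * hnum um up * (up ^ n - um ^ n)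
          + (1 - α) * ((up ^ (m + 1) + um ^ (m + 1)) / 2) * (up ^ n - um ^ n)
          = ((n : ℝ) / ((m : ℝ) + (n : ℝ) + 1)) * (up ^ (m + n + 1) - um ^ (m + n + 1))) := by
  rintro ⟨hnum, α, hsym, hcons, heq⟩
  have h := heq (-1) 1
  have h1 : ((-1 : ℝ)) ^ n = 1 := hne.neg_one_pow
  have h2 : ((-1 : ℝ)) ^ (m + 1) = -1 := (hme.add_one).neg_one_pow
  have h3 : ((-1 : ℝ)) ^ (m + n + 1) = -1 := ((hme.add hne).add_one).neg_one_pow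
  rw [one_pow, one_pow, one_pow, h1, h2, h3] at h
  simp only [sub_self, mul_zero] at h
  have hd : (0 : ℝ) < (m : ℝ) + (n : ℝ) + 1 := by positivity
  have hn' : (0 : ℝ) < (n : ℝ) := by exact_mod_cast Nat.lt_of_lt_of_le Nat.zero_lt_two hn
  have : ((n : ℝ) / ((m : ℝ) + (n : ℝ) + 1)) * (1 - (-1)) > 0 := by
    have : (1 : ℝ) - (-1) = 2 := by norm_num
    rw [this]
    positivity
  nlinarith [h, this]
end

section
/- For the one-dimensional shallow-water equations with bathymetry b and gravitational constant g, with entropy U = ½hv² + ½gh² + ghb, entropy flux F = ½hv³ + ghv(h+b), entropy variables ω = (−½v² + gh + gb, v) and entropy potential ψ = ½gh²v: for every α ∈ ℝ, the numerical fluxes f^h = α⟨h⟩⟨v⟩ + (1−α)⟨hv⟩, f^{hv} = f^h⟨v⟩ + (1−α)g⟨h⟩² + (α−½)g⟨h²⟩, together with hnum = ⟨h⟩ in the nonconservative topography term, satisfy the entropy conservation condition ⟦ω⟧·(f^h, f^{hv}) − αg⟨v⟩⟨h⟩⟦b⟧ − (1−α)g⟨hv⟩⟦b⟧ = ⟦ψ⟧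 for all states (h₋,v₋,b₋), (h₊,v₊,b₊) with h₋,h₊ > 0. -/
/-- One-parameter family of entropy-conservative numerical fluxes for the 1D
shallow-water equations with bathymetry: for every `α ∈ ℝ`, the fluxes
`f^h = α⟨h⟩⟨v⟩ + (1−α)⟨hv⟩`, `f^{hv} = f^h⟨v⟩ + (1−α)g⟨h⟩² + (α−½)g⟨h²⟩`
with `hnum = ⟨h⟩` satisfy the entropy conservation condition
`⟦ω⟧·(f^h, f^{hv}) − αg⟨v⟩⟨h⟩⟦b⟧ − (1−α)g⟨hv⟩⟦b⟧ = ⟦ψ⟧`. -/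
theorem shallow_water_entropy_conservation
    (g α : ℝ) (hm vm bm hp vp bp : ℝ) (hhm : 0 < hm) (hhp : 0 < hp) :
    ((-(1/2) * vp ^ 2 + g * hp + g * bp) - (-(1/2) * vm ^ 2 + g * hm + g * bm))
        * (α * ((hp + hm) / 2) * ((vp + vm) / 2) + (1 - α) * ((hp * vp + hm * vm) / 2))
      + (vp - vm)
        * ((α * ((hp + hm) / 2) * ((vp + vm) / 2) + (1 - α) * ((hp * vp + hm * vm) / 2))
              * ((vp + vm) / 2)
            + (1 - α) * g * ((hp + hm) / 2) ^ 2
            + (α - 1/2) * g * ((hp ^ 2 + hm ^ 2) / 2))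
      - α * g * ((vp + vm) / 2) * ((hp + hm) / 2) * (bp - bm)
      - (1 - α) * g * ((hp * vp + hm * vm) / 2) * (bp - bm)
      = (1/2) * g * hp ^ 2 * vp - (1/2) * g * hm ^ 2 * vm := by
  ring
end

section
/- For the compressible Euler equations in nonconservative form with the ideal gas law p = (γ−1)ϱe, the numerical fluxes f^ϱ = ϱ^log ⟨v⟩, f^{ϱv} = ⟨v⟩f^ϱ + ⟨p⟩, f^{ϱe} = (1/(γ−1))·f^ϱ / (ϱ/p)^log + ⟨v⟩⟨p⟩, and vnum = ⟨v⟩, where a^log = ⟦a⟧/⟦log a⟧ denotes the logarithmic mean, satisfy the entropy conservation condition ⟦log ϱ⟧ f^ϱ + (1/(γ−1))⟦log(ϱ/p)⟧ f^ϱ − ⟦ϱ/p⟧ f^{ϱe} − ⟨ϱ/p⟩ vnum ⟦p⟧ = 0 for all states (ϱ₋,v₋,p₋), (ϱ₊,v₊,p₊) with ϱ±, p± > 0. -/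
/-- The logarithmic mean `a^log = ⟦a⟧/⟦log a⟧`, equal to `a` for equal arguments. -/
noncomputable def logMean (am ap : ℝ) : ℝ :=
  if am = ap then am else (ap - am) / (Real.log ap - Real.log am)

lemma logMean_ne_zero (am ap : ℝ) (ham : 0 < am) (hap : 0 < ap) :
    logMean am ap ≠ 0 := by
  unfold logMean
  split_ifs with h
  · exact ne_of_gt ham
  · have hlog : Real.log ap - Real.log am ≠ 0 := by
      intro hc
      exact h (Real.log_injOn_pos (Set.mem_Ioi.mpr ham) (Set.mem_Ioi.mpr hap)
        (by linarith [sub_eq_zero.mp hc]))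
    exact div_ne_zero (sub_ne_zero.mpr (fun hc => h hc.symm)) hlog

lemma logMean_mul (am ap : ℝ) (ham : 0 < am) (hap : 0 < ap) :
    (Real.log ap - Real.log am) * logMean am ap = ap - am := by
  unfold logMean
  split_ifs with h
  · simp [h]
  · have hlog : Real.log ap - Real.log am ≠ 0 := by
      intro hc
      exact h (Real.log_injOn_pos (Set.mem_Ioi.mpr ham) (Set.mem_Ioi.mpr hap)
        (by linarith [sub_eq_zero.mp hc]))
    field_simp

/-- Entropy conservation for the compressible Euler equations in nonconservative form
with the internal energy as thermodynamic variable and ideal gas law `p = (γ−1)ϱe`: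
the fluxes `f^ϱ = ϱ^log⟨v⟩`, `f^{ϱe} = (1/(γ−1)) f^ϱ/(ϱ/p)^log + ⟨v⟩⟨p⟩`, `vnum = ⟨v⟩`
satisfy `⟦log ϱ⟧ f^ϱ + (1/(γ−1))⟦log(ϱ/p)⟧ f^ϱ − ⟦ϱ/p⟧ f^{ϱe} − ⟨ϱ/p⟩ vnum ⟦p⟧ = 0`. -/
theorem euler_nonconservative_entropy_conservation
    (γ : ℝ) (hγ : 1 < γ)
    (ϱm vm pm ϱp vp pp : ℝ)
    (hϱm : 0 < ϱm) (hϱp : 0 < ϱp) (hpm : 0 < pm) (hpp : 0 < pp) :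
    (Real.log ϱp - Real.log ϱm) * (logMean ϱm ϱp * ((vp + vm) / 2))
      + (1 / (γ - 1)) * (Real.log (ϱp / pp) - Real.log (ϱm / pm))
          * (logMean ϱm ϱp * ((vp + vm) / 2))
      - (ϱp / pp - ϱm / pm)
          * ((1 / (γ - 1)) * (logMean ϱm ϱp * ((vp + vm) / 2)) / logMean (ϱm / pm) (ϱp / pp)
              + ((vp + vm) / 2) * ((pp + pm) / 2))
      - ((ϱp / pp + ϱm / pm) / 2) * ((vp + vm) / 2) * (pp - pm)
      = 0 := by
  have hm : 0 < ϱm / pm := div_pos hϱm hpm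
  have hp : 0 < ϱp / pp := div_pos hϱp hpp
  have h1 := logMean_mul ϱm ϱp hϱm hϱp
  have h2 := logMean_mul (ϱm / pm) (ϱp / pp) hm hp
  have hM := logMean_ne_zero (ϱm / pm) (ϱp / pp) hm hp
  set L := logMean ϱm ϱp
  set M := logMean (ϱm / pm) (ϱp / pp)
  -- substitute jumps of logs using h1, h2
  have e1 : Real.log ϱp - Real.log ϱm = (ϱp - ϱm) / L := by
    have hL : L ≠ 0 := logMean_ne_zero ϱm ϱp hϱm hϱp
    field_simp
    linarith [h1]
  have e2 : Real.log (ϱp / pp) - Real.log (ϱm / pm) = (ϱp / pp - ϱm / pm) / M :=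
    eq_div_of_mul_eq hM h2
  rw [e1, e2]
  have hL : L ≠ 0 := logMean_ne_zero ϱm ϱp hϱm hϱp
  have hγ' : γ - 1 ≠ 0 := by linarith
  field_simp
  ring
end

section
/- For the compressible Euler equations in nonconservative form with gravity potential φ, total energy U = ϱe + ½ϱv² + ϱφ, entropy variables ω = (−½v² + φ, v, 1), and entropy potential ψ = pv: any numerical fluxes satisfying the kinetic-energy-preserving conditions f^ϱ = ϱnum⟨v⟩, f^{ϱv} = ⟨v⟩f^ϱ + ⟨p⟩, and vnum = ⟨v⟩ (with ϱnum any symmetric consistent density flux) satisfy the total-energy conservation condition −½⟦v²⟧f^ϱ + ⟦φ⟧f^ϱ + ⟦v⟧f^{ϱv} − ⟨v⟩ϱnum⟦φ⟧ + vnum⟦p⟧ = ⟦pv⟧ for all pairs of states. -/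
/-- Kinetic-energy-preserving fluxes conserve the total energy for the compressible
Euler equations in nonconservative form with a gravity potential: for any symmetric
consistent density flux `ϱnum`, the fluxes `f^ϱ = ϱnum⟨v⟩`, `f^{ϱv} = ⟨v⟩f^ϱ + ⟨p⟩`,
`vnum = ⟨v⟩` satisfy the total-energy conservation condition
`−½⟦v²⟧f^ϱ + ⟦φ⟧f^ϱ + ⟦v⟧f^{ϱv} − ⟨v⟩ϱnum⟦φ⟧ + vnum⟦p⟧ = ⟦pv⟧`. -/
theorem kep_implies_total_energy_conservation
    (ϱnum : (ℝ × ℝ × ℝ × ℝ) → (ℝ × ℝ × ℝ × ℝ) → ℝ)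
    (hsymm : ∀ u w, ϱnum u w = ϱnum w u)
    (hcons : ∀ u, ϱnum u u = u.1) :
    ∀ ϱm vm pm φm ϱp vp pp φp : ℝ,
      -(1/2) * (vp ^ 2 - vm ^ 2) * (ϱnum (ϱm, vm, pm, φm) (ϱp, vp, pp, φp) * ((vp + vm) / 2))
        + (φp - φm) * (ϱnum (ϱm, vm, pm, φm) (ϱp, vp, pp, φp) * ((vp + vm) / 2))
        + (vp - vm) * (((vp + vm) / 2)
            * (ϱnum (ϱm, vm, pm, φm) (ϱp, vp, pp, φp) * ((vp + vm) / 2)) + (pp + pm) / 2)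
        - ((vp + vm) / 2) * ϱnum (ϱm, vm, pm, φm) (ϱp, vp, pp, φp) * (φp - φm)
        + ((vp + vm) / 2) * (pp - pm)
        = pp * vp - pm * vm := by
  intro ϱm vm pm φm ϱp vp pp φp
  generalize ϱnum (ϱm, vm, pm, φm) (ϱp, vp, pp, φp) = r
  ring
end

section
/- For the compressible Euler equations in nonconservative form, the fluxes f^ϱ = (ϱ^log − ½⟦ϱ⟧·sign(V))·V, f^{ϱe} = (1/(γ−1))·f^ϱ/(ϱ/p)^log + ⟨p⟩V, vnum = V, with interface velocity V = ⟨v⟩ − β⟦p⟧ for any β ≥ 0, satisfy the entropy stability inequality ⟦log ϱ⟧f^ϱ + (1/(γ−1))⟦log(ϱ/p)⟧f^ϱ − ⟦ϱ/p⟧f^{ϱe} − ⟨ϱ/p⟩vnum⟦p⟧ ≤ 0 for all positive states, with the left-hand side equal to −½⟦log ϱ⟧⟦ϱ⟧ sign(V)·V. -/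
/-- The logarithmic mean of positive numbers is positive. -/
lemma logMean_pos (am ap : ℝ) (ham : 0 < am) (hap : 0 < ap) : 0 < logMean am ap := by
  unfold logMean
  by_cases h : am = ap
  · simpa [h] using ham
  · rw [if_neg h]
    rcases lt_or_gt_of_ne h with h1 | h1
    · exact div_pos (by linarith) (by have := Real.log_lt_log ham h1; linarith)
    · have := Real.log_lt_log hap h1
      have h2 : ap - am < 0 := by linarith
      exact div_pos_of_neg_of_neg h2 (by linarith)

/-- Abstract algebraic identity behind the entropy-production computation. -/
lemma euler_alg (A B RM TM s V c ρm ρp pm pp τm τp : ℝ) (hTM : TM ≠ 0)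
    (h1 : A * RM = ρp - ρm) (h2 : B * TM = τp - τm)
    (h3 : τp * pp = ρp) (h4 : τm * pm = ρm) :
    A * ((RM - s) * V) + c * B * ((RM - s) * V)
      - (τp - τm) * (c * ((RM - s) * V) / TM + ((pp+pm)/2) * V)
      - ((τp + τm)/2) * V * (pp - pm) = -(A * s * V) := by
  have hdiv : (τp - τm) * (c * ((RM - s) * V) / TM)
      = c * B * ((RM - s) * V) := by
    rw [← h2]; field_simp
  rw [mul_add, hdiv]
  linear_combination V * h1 - V * h3 + V * h4

/-- Entropy stability of the upwinded fluxes for the compressible Euler equations in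
nonconservative form: with interface velocity `V = ⟨v⟩ − β⟦p⟧`, `β ≥ 0`, the fluxes
`f^ϱ = (ϱ^log − ½⟦ϱ⟧ sign V)·V`, `f^{ϱe} = (1/(γ−1)) f^ϱ/(ϱ/p)^log + ⟨p⟩V`, `vnum = V`
satisfy the entropy stability inequality, and the entropy production equals
`−½⟦log ϱ⟧⟦ϱ⟧ sign(V)·V`. -/
theorem euler_nonconservative_entropy_stability
    (γ : ℝ) (hγ : 1 < γ) (β : ℝ) (hβ : 0 ≤ β)
    (ϱm vm pm ϱp vp pp : ℝ)
    (hϱm : 0 < ϱm) (hϱp : 0 < ϱp) (hpm : 0 < pm) (hpp : 0 < pp) :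
    (Real.log ϱp - Real.log ϱm)
        * ((logMean ϱm ϱp - (1/2) * (ϱp - ϱm) * Real.sign ((vp + vm) / 2 - β * (pp - pm)))
            * ((vp + vm) / 2 - β * (pp - pm)))
      + (1 / (γ - 1)) * (Real.log (ϱp / pp) - Real.log (ϱm / pm))
          * ((logMean ϱm ϱp - (1/2) * (ϱp - ϱm) * Real.sign ((vp + vm) / 2 - β * (pp - pm)))
              * ((vp + vm) / 2 - β * (pp - pm)))
      - (ϱp / pp - ϱm / pm)
          * ((1 / (γ - 1))
                * ((logMean ϱm ϱp
                      - (1/2) * (ϱp - ϱm) * Real.sign ((vp + vm) / 2 - β * (pp - pm)))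
                    * ((vp + vm) / 2 - β * (pp - pm)))
                / logMean (ϱm / pm) (ϱp / pp)
              + ((pp + pm) / 2) * ((vp + vm) / 2 - β * (pp - pm)))
      - ((ϱp / pp + ϱm / pm) / 2) * ((vp + vm) / 2 - β * (pp - pm)) * (pp - pm)
      = -(1/2) * (Real.log ϱp - Real.log ϱm) * (ϱp - ϱm)
          * Real.sign ((vp + vm) / 2 - β * (pp - pm)) * ((vp + vm) / 2 - β * (pp - pm)) ∧
    (Real.log ϱp - Real.log ϱm)
        * ((logMean ϱm ϱp - (1/2) * (ϱp - ϱm) * Real.sign ((vp + vm) / 2 - β * (pp - pm)))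
            * ((vp + vm) / 2 - β * (pp - pm)))
      + (1 / (γ - 1)) * (Real.log (ϱp / pp) - Real.log (ϱm / pm))
          * ((logMean ϱm ϱp - (1/2) * (ϱp - ϱm) * Real.sign ((vp + vm) / 2 - β * (pp - pm)))
              * ((vp + vm) / 2 - β * (pp - pm)))
      - (ϱp / pp - ϱm / pm)
          * ((1 / (γ - 1))
                * ((logMean ϱm ϱp
                      - (1/2) * (ϱp - ϱm) * Real.sign ((vp + vm) / 2 - β * (pp - pm)))
                    * ((vp + vm) / 2 - β * (pp - pm)))
                / logMean (ϱm / pm) (ϱp / pp)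
              + ((pp + pm) / 2) * ((vp + vm) / 2 - β * (pp - pm)))
      - ((ϱp / pp + ϱm / pm) / 2) * ((vp + vm) / 2 - β * (pp - pm)) * (pp - pm)
      ≤ 0 := by
  have hτm : 0 < ϱm / pm := div_pos hϱm hpm
  have hτp : 0 < ϱp / pp := div_pos hϱp hpp
  have h1 := logMean_mul ϱm ϱp hϱm hϱp
  have h2 := logMean_mul (ϱm/pm) (ϱp/pp) hτm hτp
  have hTM := logMean_pos (ϱm/pm) (ϱp/pp) hτm hτp
  have hRM := logMean_pos ϱm ϱp hϱm hϱp
  set V : ℝ := (vp + vm) / 2 - β * (pp - pm) with hV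
  set S : ℝ := Real.sign V with hS
  clear_value S V
  have key := euler_alg (Real.log ϱp - Real.log ϱm)
    (Real.log (ϱp / pp) - Real.log (ϱm / pm)) (logMean ϱm ϱp)
    (logMean (ϱm / pm) (ϱp / pp)) ((1/2) * (ϱp - ϱm) * S) V (1 / (γ - 1))
    ϱm ϱp pm pp (ϱm / pm) (ϱp / pp) (ne_of_gt hTM) h1 h2
    (div_mul_cancel₀ ϱp (ne_of_gt hpp)) (div_mul_cancel₀ ϱm (ne_of_gt hpm))
  constructor
  · linear_combination key
  · have goal_eq : (Real.log ϱp - Real.log ϱm)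
        * ((logMean ϱm ϱp - (1/2) * (ϱp - ϱm) * S) * V)
      + (1 / (γ - 1)) * (Real.log (ϱp / pp) - Real.log (ϱm / pm))
          * ((logMean ϱm ϱp - (1/2) * (ϱp - ϱm) * S) * V)
      - (ϱp / pp - ϱm / pm)
          * ((1 / (γ - 1)) * ((logMean ϱm ϱp - (1/2) * (ϱp - ϱm) * S) * V)
                / logMean (ϱm / pm) (ϱp / pp)
              + ((pp + pm) / 2) * V)
      - ((ϱp / pp + ϱm / pm) / 2) * V * (pp - pm)
      = -((Real.log ϱp - Real.log ϱm) * ((1/2) * (ϱp - ϱm) * S) * V) := by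
      linear_combination key
    rw [goal_eq]
    have hSV : 0 ≤ S * V := by
      rcases lt_trichotomy V 0 with h | h | h
      · rw [hS, Real.sign_of_neg h]; nlinarith
      · simp [h]
      · rw [hS, Real.sign_of_pos h]; nlinarith
    have hAϱ : 0 ≤ (Real.log ϱp - Real.log ϱm) * (ϱp - ϱm) := by
      have e : (Real.log ϱp - Real.log ϱm) * (ϱp - ϱm)
          = (Real.log ϱp - Real.log ϱm) * (Real.log ϱp - Real.log ϱm) * logMean ϱm ϱp := by
        rw [mul_assoc, h1]
      rw [e]
      exact mul_nonneg (mul_self_nonneg _) (le_of_lt hRM)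
    have h0 := mul_nonneg hAϱ hSV
    have e2 : (Real.log ϱp - Real.log ϱm) * ((1/2) * (ϱp - ϱm) * S) * V
        = (1/2) * ((Real.log ϱp - Real.log ϱm) * (ϱp - ϱm) * (S * V)) := by ring
    rw [e2]
    linarith
end

section
/- Let D ∈ ℝ^{N×N} with D·1 = 0, and h, g ∈ ℝᴺ. Then for each i: (a) Σₖ 2D_{ik}·(hₖgₖ+hᵢgᵢ)/2 − Σₖ 2D_{ik}·(hᵢ+hₖ)/2·gᵢ = (D(h∘g) − G D h)ᵢ; (b) Σₖ 2D_{ik}·(hᵢ+hₖ)/2·(gᵢ+gₖ)/2 − Σₖ 2D_{ik}·(hᵢ+hₖ)/2·gᵢ = ½(D(h∘g) + H D g − G D h)ᵢ; (c) Σₖ 2D_{ik}·(hᵢgₖ + hₖgᵢ)/2 − Σₖ 2D_{ik}·(hᵢ+hₖ)/2·gᵢ = (H D g)ᵢ. -/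
private lemma sum_eq_of_rowsum_zero {ι : Type*} [Fintype ι] (d f r : ι → ℝ) (c : ℝ)
    (hd : ∑ k, d k = 0) (hfr : ∀ k, f k = r k + c * d k) :
    ∑ k, f k = ∑ k, r k := by
  simp only [hfr, Finset.sum_add_distrib, ← Finset.mul_sum, hd, mul_zero, add_zero]


open Finset Matrix

/-- Discrete split forms generated by the fourth semi-discrete form of the
nonconservative product: with volume fluxes given by the arithmetic mean of the product,
the product of arithmetic means, and the product mean, one recovers the discrete product
rule `(D(h∘g) − G D h)ᵢ`, the split form `½(D(h∘g) + H D g − G D h)ᵢ`, and the strong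
form `(H D g)ᵢ`, respectively. -/
theorem fourth_form_split_forms
    (N : ℕ) (D : Matrix (Fin N) (Fin N) ℝ)
    (hD : ∀ i, ∑ k, D i k = 0)
    (h g : Fin N → ℝ) :
    ∀ i,
      ((∑ k, 2 * D i k * ((h k * g k + h i * g i) / 2))
          - (∑ k, 2 * D i k * ((h i + h k) / 2) * g i)
        = (D.mulVec (h * g)) i - g i * (D.mulVec h) i) ∧
      ((∑ k, 2 * D i k * ((h i + h k) / 2) * ((g i + g k) / 2))
          - (∑ k, 2 * D i k * ((h i + h k) / 2) * g i)
        = (1/2) * ((D.mulVec (h * g)) i + h i * (D.mulVec g) i - g i * (D.mulVec h) i)) ∧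
      ((∑ k, 2 * D i k * ((h i * g k + h k * g i) / 2))
          - (∑ k, 2 * D i k * ((h i + h k) / 2) * g i)
        = h i * (D.mulVec g) i) := by
  intro i
  have h0 := hD i
  refine ⟨?_, ?_, ?_⟩
  · simp only [Matrix.mulVec, dotProduct, Pi.mul_apply, Finset.mul_sum,
      ← Finset.sum_sub_distrib, ← Finset.sum_add_distrib]
    exact sum_eq_of_rowsum_zero (D i) _ _ 0 h0 (fun k => by ring)
  · simp only [Matrix.mulVec, dotProduct, Pi.mul_apply, Finset.mul_sum,
      ← Finset.sum_sub_distrib, ← Finset.sum_add_distrib]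
    exact sum_eq_of_rowsum_zero (D i) _ _ (-(h i * g i) / 2) h0 (fun k => by ring)
  · simp only [Matrix.mulVec, dotProduct, Pi.mul_apply, Finset.mul_sum,
      ← Finset.sum_sub_distrib, ← Finset.sum_add_distrib]
    exact sum_eq_of_rowsum_zero (D i) _ _ (-(h i * g i)) h0 (fun k => by ring)
end

section
/- Well-balancedness characterization: let fnum, Hnum be consistent two-point fluxes (fnum(u,u) = f(u), Hnum(u,u) = H(u)) and α ∈ ℝ. Then the three-state identity fnum(u₀,u₊) − fnum(u₋,u₀) + (α/2)(Hnum(u₀,u₊)(g(u₊)−g(u₀)) + Hnum(u₋,u₀)(g(u₀)−g(u₋))) + ((1−α)/2)(H(u₀)(g(u₊)−g(u₀)) + H(u₀)(g(u₀)−g(u₋))) = 0 holds for all u₋, u₀, u₊ ∈ Y, if and only if both two-state identities hold for all u₋, u₊ ∈ Y: fnum(u₋,u₊) + (α/2)Hnum(u₋,u₊)(g(u₊)−g(u₋)) + ((1−α)/2)H(u₋)(g(u₊)−g(u₋)) = f(u₋), and −fnum(u₋,u₊) + (α/2)Hnum(u₋,u₊)(g(u₊)−g(u₋)) + ((1−α)/2)H(u₊)(g(u₊)−g(u₋))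 = −f(u₊). -/
open Matrix

/-- Well-balancedness characterization for the combined first/third form: the
three-state steady-state identity holds for all states in `Y` if and only if the two
two-state well-balancedness identities hold for all states in `Y`. -/
theorem well_balanced_characterization
    (n m : ℕ) (Y : Set (Fin n → ℝ)) (hY : IsOpen Y)
    (f : (Fin n → ℝ) → (Fin n → ℝ))
    (H : (Fin n → ℝ) → Matrix (Fin n) (Fin m) ℝ)
    (g : (Fin n → ℝ) → (Fin m → ℝ))
    (fnum : (Fin n → ℝ) → (Fin n → ℝ) → (Fin n → ℝ))
    (Hnum : (Fin n → ℝ) → (Fin n → ℝ) → Matrix (Fin n) (Fin m) ℝ)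
    (α : ℝ)
    (hfcons : ∀ u ∈ Y, fnum u u = f u)
    (hHcons : ∀ u ∈ Y, Hnum u u = H u) :
    (∀ um ∈ Y, ∀ u0 ∈ Y, ∀ up ∈ Y,
      fnum u0 up - fnum um u0
        + (α / 2) • (Hnum u0 up *ᵥ (g up - g u0) + Hnum um u0 *ᵥ (g u0 - g um))
        + ((1 - α) / 2) • (H u0 *ᵥ (g up - g u0) + H u0 *ᵥ (g u0 - g um))
        = 0) ↔
    ((∀ um ∈ Y, ∀ up ∈ Y,
      fnum um up + (α / 2) • (Hnum um up *ᵥ (g up - g um))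
        + ((1 - α) / 2) • (H um *ᵥ (g up - g um)) = f um) ∧
     (∀ um ∈ Y, ∀ up ∈ Y,
      -fnum um up + (α / 2) • (Hnum um up *ᵥ (g up - g um))
        + ((1 - α) / 2) • (H up *ᵥ (g up - g um)) = -f up)) := by
  constructor
  · intro h
    constructor
    · intro um hm up hp
      have h1 := h um hm um hm up hp
      simp only [sub_self, Matrix.mulVec_zero, add_zero, zero_add, hfcons um hm] at h1
      linear_combination (norm := module) h1
    · intro um hm up hp
      have h1 := h um hm up hp up hp
      simp only [sub_self, Matrix.mulVec_zero, add_zero, zero_add, hfcons up hp] at h1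
      linear_combination (norm := module) h1
  · rintro ⟨h1, h2⟩ um hm u0 h0 up hp
    linear_combination (norm := module) h1 u0 h0 up hp + h2 um hm u0 h0
end

section
/- For the hyperbolized Sainte-Marie (dispersive shallow-water) system, the numerical fluxes f^h = α₁⟨h⟩⟨v⟩ + (1−α₁)⟨hv⟩, f^{hv} = f^h⟨v⟩ + (1−α₁)g⟨h⟩² + (α₁−½)g⟨h²⟩ + α₃⟨p⟩⟨h⟩ + (1−α₃)⟨ph⟩, f^{hw} = f^h⟨w⟩, f^{hp} = f^h⟨p⟩, with nonconservative fluxes hnum = ⟨h⟩, vnum = ⟨v⟩, pnum = ⟨p⟩ and parameters α₂ = α₄, satisfy the entropy conservation condition ⟦ω⟧·fnum − Σ_{k=1}^4 (α_k⟨ω⟩·H_k^num⟦g_k⟧ + (1−α_k)⟨ω·H_k⟩⟦g_k⟧) = ⟦ψ⟧ for all states with h₋,h₊ > 0, where U = ½hv² + ½hw² + (1/(2c²))hp² + ½gh² + ghb is the total energy, ω = (−v²/2 − w²/2 − p²/(2c²) + gh + gb, v, w, p/c²), and ψ = ½gh²v. -/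
/-- Entropy (total energy) conservation of the numerical fluxes for the hyperbolized
Sainte-Marie dispersive shallow-water system: with `f^h = α₁⟨h⟩⟨v⟩ + (1−α₁)⟨hv⟩`,
`f^{hv} = f^h⟨v⟩ + (1−α₁)g⟨h⟩² + (α₁−½)g⟨h²⟩ + α₃⟨p⟩⟨h⟩ + (1−α₃)⟨ph⟩`,
`f^{hw} = f^h⟨w⟩`, `f^{hp} = f^h⟨p⟩`, nonconservative fluxes `hnum = ⟨h⟩`,
`vnum = ⟨v⟩`, `pnum = ⟨p⟩`, and `α₄ = α₂`, the entropy conservation condition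
`⟦ω⟧·fnum − Σₖ (αₖ⟨ω⟩·Hₖnum⟦gₖ⟧ + (1−αₖ)⟨ω·Hₖ⟩⟦gₖ⟧) = ⟦ψ⟧` holds. -/
theorem sainte_marie_entropy_conservation
    (g c : ℝ) (hg : 0 < g) (hc : 0 < c)
    (α₁ α₂ α₃ : ℝ)
    (hm vm wm pm bm hp vp wp pp bp : ℝ)
    (hhm : 0 < hm) (hhp : 0 < hp) :
    let mh := (hp + hm) / 2
    let mv := (vp + vm) / 2
    let mw := (wp + wm) / 2
    let mp := (pp + pm) / 2
    let fh := α₁ * mh * mv + (1 - α₁) * ((hp * vp + hm * vm) / 2)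
    let fhv := fh * mv + (1 - α₁) * g * mh ^ 2 + (α₁ - 1/2) * g * ((hp ^ 2 + hm ^ 2) / 2)
      + α₃ * mp * mh + (1 - α₃) * ((pp * hp + pm * hm) / 2)
    let fhw := fh * mw
    let fhp := fh * mp
    ((-vp ^ 2 / 2 - wp ^ 2 / 2 - pp ^ 2 / (2 * c ^ 2) + g * hp + g * bp)
        - (-vm ^ 2 / 2 - wm ^ 2 / 2 - pm ^ 2 / (2 * c ^ 2) + g * hm + g * bm)) * fh
      + (vp - vm) * fhv + (wp - wm) * fhw + (pp / c ^ 2 - pm / c ^ 2) * fhp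
      - (α₁ * mv * (g * mh) * (bp - bm)
          + (1 - α₁) * ((vp * (g * hp) + vm * (g * hm)) / 2) * (bp - bm))
      - (α₂ * mv * (2 * mp) * (bp - bm)
          + (1 - α₂) * ((vp * (2 * pp) + vm * (2 * pm)) / 2) * (bp - bm))
      - (α₃ * ((pp / c ^ 2 + pm / c ^ 2) / 2) * (c ^ 2 * mh) * (vp - vm)
          + (1 - α₃) * ((pp / c ^ 2 * (c ^ 2 * hp) + pm / c ^ 2 * (c ^ 2 * hm)) / 2) * (vp - vm))
      - (α₂ * ((pp / c ^ 2 + pm / c ^ 2) / 2) * (-(2 * c ^ 2) * mv) * (bp - bm)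
          + (1 - α₂) * ((pp / c ^ 2 * (-(2 * c ^ 2) * vp)
              + pm / c ^ 2 * (-(2 * c ^ 2) * vm)) / 2) * (bp - bm))
      = (1/2) * g * hp ^ 2 * vp - (1/2) * g * hm ^ 2 * vm := by
  have hc2 : c ^ 2 ≠ 0 := pow_ne_zero 2 hc.ne'
  simp only []
  field_simp
  ring
end

section
/- Lake-at-rest well-balancedness of the Sainte-Marie scheme: under the steady state v = w = p = 0 and h + b = const, the numerical fluxes of the entropy-conservative Sainte-Marie scheme satisfy, at every interface, f^h = f^{hw} = f^{hp} = 0 and the momentum balance f^{hv}(uᵢ,u_{i+1}) − f^{hv}(u_{i−1},uᵢ) + ½(α₁g⟨h⟩_{i+1/2} + 2α₂⟨p⟩_{i+1/2})⟦b⟧_{i+1/2} + ½(α₁g⟨h⟩_{i−1/2} + 2α₂⟨p⟩_{i−1/2})⟦b⟧_{i−1/2} + ((1−α₁)ghᵢ + (1−α₂)2pᵢ)·(⟦b⟧_{i+1/2}+⟦b⟧_{i−1/2})/2 = 0, so that ∂ₜuᵢ = 0 for all i. -/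
/-- Interface arithmetic mean at interface `i+1/2` (between cells `i` and `i+1`). -/
noncomputable def imean (a : ℤ → ℝ) (i : ℤ) : ℝ := (a (i + 1) + a i) / 2

/-- Interface jump at interface `i+1/2`. -/
noncomputable def ijump (a : ℤ → ℝ) (i : ℤ) : ℝ := a (i + 1) - a i

/-- Mass flux of the entropy-conservative Sainte-Marie scheme. -/
noncomputable def fhSM (α₁ : ℝ) (h v : ℤ → ℝ) (i : ℤ) : ℝ :=
  α₁ * imean h i * imean v i + (1 - α₁) * imean (fun k => h k * v k) i

/-- Momentum flux of the entropy-conservative Sainte-Marie scheme. -/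
noncomputable def fhvSM (α₁ α₃ g : ℝ) (h v p : ℤ → ℝ) (i : ℤ) : ℝ :=
  fhSM α₁ h v i * imean v i + (1 - α₁) * g * (imean h i) ^ 2
    + (α₁ - 1/2) * g * imean (fun k => (h k) ^ 2) i
    + α₃ * imean p i * imean h i + (1 - α₃) * imean (fun k => p k * h k) i

/-- Lake-at-rest well-balancedness of the entropy-conservative Sainte-Marie scheme:
under `v = w = p = 0` and `h + b = const`, all fluxes `f^h`, `f^{hw}`, `f^{hp}` vanish
and the discrete momentum balance (hydrostatic pressure vs. topography terms) is zero,
so the scheme preserves the steady state. -/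
theorem sainte_marie_lake_at_rest_well_balanced
    (g c α₁ α₂ α₃ H0 : ℝ)
    (h v w p b : ℤ → ℝ)
    (hv : ∀ i, v i = 0) (hw : ∀ i, w i = 0) (hp : ∀ i, p i = 0)
    (hb : ∀ i, h i + b i = H0) :
    ∀ i : ℤ,
      fhSM α₁ h v i = 0 ∧
      fhSM α₁ h v i * imean w i = 0 ∧
      fhSM α₁ h v i * imean p i = 0 ∧
      fhvSM α₁ α₃ g h v p i - fhvSM α₁ α₃ g h v p (i - 1)
        + (1/2) * (α₁ * g * imean h i + 2 * α₂ * imean p i) * ijump b i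
        + (1/2) * (α₁ * g * imean h (i - 1) + 2 * α₂ * imean p (i - 1)) * ijump b (i - 1)
        + ((1 - α₁) * g * h i + (1 - α₂) * 2 * p i) * (ijump b i + ijump b (i - 1)) / 2
        = 0 := by
  intro i
  have hbi : ∀ k : ℤ, b k = H0 - h k := fun k => by linarith [hb k]
  have hi1 : (i - 1 + 1 : ℤ) = i := by ring
  simp only [fhSM, fhvSM, imean, ijump, hv, hw, hp, hbi, hi1]
  refine ⟨by ring, by ring, by ring, by ring⟩
end

section
/- Discrete kinetic energy preservation implies pressure-equilibrium preservation: consider a finite volume semi-discretization of the nonconservative Euler system in which f^ϱ = ϱnum⟨v⟩ and f^{ϱv} = ⟨v⟩f^ϱ + ⟨p⟩ with ϱnum symmetric and consistent. If at some time the discrete states satisfy vᵢ = v* and pᵢ = p* for all i (constant velocity and pressure), then −Δx·ϱᵢ∂ₜvᵢ = (f^{ϱv}_{i+1/2} − f^{ϱv}_{i−1/2}) − vᵢ(f^ϱ_{i+1/2} − f^ϱ_{i−1/2}) = 0 for all i; i.e., the velocity remains constant at this instant. -/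
/-- Kinetic-energy-preserving fluxes are pressure-equilibrium preserving: with
`f^ϱ = ϱnum⟨v⟩` and `f^{ϱv} = ⟨v⟩f^ϱ + ⟨p⟩` (`ϱnum` symmetric and consistent), at a
state of constant velocity and pressure the discrete momentum residual
`(f^{ϱv}_{i+1/2} − f^{ϱv}_{i−1/2}) − vᵢ(f^ϱ_{i+1/2} − f^ϱ_{i−1/2})` vanishes, i.e.
`−Δx·ϱᵢ∂ₜvᵢ = 0`. -/
theorem kep_implies_pressure_equilibrium_preservation
    (ϱnum : (ℝ × ℝ × ℝ) → (ℝ × ℝ × ℝ) → ℝ)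
    (hsymm : ∀ u w, ϱnum u w = ϱnum w u)
    (hcons : ∀ u, ϱnum u u = u.1)
    (ϱ v p : ℤ → ℝ) (vstar pstar : ℝ)
    (hv : ∀ i, v i = vstar) (hp : ∀ i, p i = pstar) :
    ∀ i : ℤ,
      (((v (i + 1) + v i) / 2) * (ϱnum (ϱ i, v i, p i) (ϱ (i + 1), v (i + 1), p (i + 1))
            * ((v (i + 1) + v i) / 2)) + (p (i + 1) + p i) / 2)
        - (((v i + v (i - 1)) / 2) * (ϱnum (ϱ (i - 1), v (i - 1), p (i - 1)) (ϱ i, v i, p i)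
            * ((v i + v (i - 1)) / 2)) + (p i + p (i - 1)) / 2)
        - v i * ((ϱnum (ϱ i, v i, p i) (ϱ (i + 1), v (i + 1), p (i + 1))
              * ((v (i + 1) + v i) / 2))
            - (ϱnum (ϱ (i - 1), v (i - 1), p (i - 1)) (ϱ i, v i, p i)
              * ((v i + v (i - 1)) / 2)))
        = 0 := by
  intro i
  simp only [hv, hp]
  ring
end

section
/- Induced total energy flux of a KEP and EC scheme: for the nonconservative Euler equations with φ = 0, fluxes f^ϱ = ϱ^log⟨v⟩, f^{ϱv} = ⟨v⟩f^ϱ + ⟨p⟩, f^{ϱe} = (1/(γ−1))·ϱ^log/(ϱ/p)^log·⟨v⟩ + ⟨v⟩⟨p⟩, vnum = ⟨v⟩, the induced numerical total energy flux F^num_{ϱE} = ⟨F_{ϱE}⟩ + ⟨ω_{ϱE}⟩·fnum − ⟨ω_{ϱE}·f⟩ − ¼⟦ω_{ϱE}⟧·Hnum⟦g⟧ equals ½ϱ^log⟨v⟩(v₋v₊) + (1/(γ−1))·ϱ^log/(ϱ/p)^log·⟨v⟩ + ½(p₋v₊ + p₊v₋), where (v₋v₊) denotes the product of the two velocity states.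 -/
/-- Induced total energy flux of the entropy-conservative and kinetic-energy-preserving
scheme for the nonconservative Euler equations (with `φ = 0`): the numerical total
energy flux `F^num_{ϱE} = ⟨F_{ϱE}⟩ + ⟨ω_{ϱE}⟩·fnum − ⟨ω_{ϱE}·f⟩ − ¼⟦ω_{ϱE}⟧·Hnum⟦g⟧`
equals `½ϱ^log⟨v⟩(v₋v₊) + (1/(γ−1))ϱ^log/(ϱ/p)^log⟨v⟩ + ½(p₋v₊ + p₊v₋)`. -/
theorem induced_total_energy_flux
    (γ : ℝ) (hγ : 1 < γ)
    (ϱm vm pm ϱp vp pp : ℝ)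
    (hϱm : 0 < ϱm) (hϱp : 0 < ϱp) (hpm : 0 < pm) (hpp : 0 < pp) :
    let fϱ := logMean ϱm ϱp * ((vp + vm) / 2)
    let fϱv := ((vp + vm) / 2) * fϱ + (pp + pm) / 2
    let fϱe := (1 / (γ - 1)) * (logMean ϱm ϱp / logMean (ϱm / pm) (ϱp / pp))
        * ((vp + vm) / 2) + ((vp + vm) / 2) * ((pp + pm) / 2)
    let ϱEm := pm / (γ - 1) + (1/2) * ϱm * vm ^ 2
    let ϱEp := pp / (γ - 1) + (1/2) * ϱp * vp ^ 2
    -- ⟨F_{ϱE}⟩ + ⟨ω_{ϱE}⟩·fnum − ⟨ω_{ϱE}·f⟩ − ¼⟦ω_{ϱE}⟧·Hnum⟦g⟧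
    (((ϱEp + pp) * vp + (ϱEm + pm) * vm) / 2)
      + (((-(1/2) * vp ^ 2) + (-(1/2) * vm ^ 2)) / 2) * fϱ
      + ((vp + vm) / 2) * fϱv
      + ((1 + 1 : ℝ) / 2) * fϱe
      - (((-(1/2) * vp ^ 2) * (ϱp * vp) + (vp * (ϱp * vp ^ 2 + pp))
            + (1 : ℝ) * ((pp / (γ - 1)) * vp + pp * vp)
          + ((-(1/2) * vm ^ 2) * (ϱm * vm) + (vm * (ϱm * vm ^ 2 + pm))
            + (1 : ℝ) * ((pm / (γ - 1)) * vm + pm * vm))) / 2)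
      - (1/4) * (((1 : ℝ) - (1 : ℝ)) * (((vp + vm) / 2) * (pp - pm)))
      = (1/2) * logMean ϱm ϱp * ((vp + vm) / 2) * (vm * vp)
        + (1 / (γ - 1)) * (logMean ϱm ϱp / logMean (ϱm / pm) (ϱp / pp)) * ((vp + vm) / 2)
        + (1/2) * (pm * vp + pp * vm) := by
  intro fϱ fϱv fϱe ϱEm ϱEp
  have h : γ - 1 ≠ 0 := by linarith
  simp only [fϱ, fϱv, fϱe, ϱEm, ϱEp]
  field_simp
  ring
end
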